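/- Let ω¹, ω² : ℝ² → ℝ be smooth ℤ²-periodic functions, let ξ¹, ξ² : ℝ² → ℝ² be smooth ℤ²-periodic vector fields, and assume ξ² is divergence-free. Write ω̄ = ω¹ − ω² and ξ̄ = ξ¹ − ξ². Then |⟨ω̄, ξ¹·∇ω¹ − ξ²·∇ω²⟩| ≤ (1/2)‖ω̄‖₂² + (1/2)‖∇ω¹‖_∞² ‖ξ̄‖₂². -/

import Mathlib

open MeasureTheory Set

noncomputable section

/-- The fundamental domain `[0,1)²` of the torus `𝕋² = ℝ²/ℤ²`. -/
def Dom : Set (ℝ × ℝ) := Set.Ico (0:ℝ) 1 ×ˢ Set.Ico (0:ℝ) 1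

/-- `ℤ²`-periodicity of a function on `ℝ²`. -/
def Per {α : Type*} (f : ℝ × ℝ → α) : Prop :=
  ∀ (x : ℝ × ℝ) (m : ℤ × ℤ), f (x.1 + (m.1 : ℝ), x.2 + (m.2 : ℝ)) = f x

/-- First partial derivative. -/
noncomputable def pd1 (f : ℝ × ℝ → ℝ) (x : ℝ × ℝ) : ℝ := fderiv ℝ f x (1, 0)

/-- Second partial derivative. -/
noncomputable def pd2 (f : ℝ × ℝ → ℝ) (x : ℝ × ℝ) : ℝ := fderiv ℝ f x (0, 1)

/-- Gradient of a scalar function on `ℝ²`. -/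
noncomputable def grad (f : ℝ × ℝ → ℝ) (x : ℝ × ℝ) : ℝ × ℝ := (pd1 f x, pd2 f x)

/-- The transport term `ξ·∇f`. -/
noncomputable def transport (ξ : ℝ × ℝ → ℝ × ℝ) (f : ℝ × ℝ → ℝ) (x : ℝ × ℝ) : ℝ :=
  (ξ x).1 * pd1 f x + (ξ x).2 * pd2 f x

/-- A vector field is divergence-free if `∂₁ξ₁ + ∂₂ξ₂ = 0` everywhere. -/
def DivFree (ξ : ℝ × ℝ → ℝ × ℝ) : Prop :=
  ∀ x, pd1 (fun y => (ξ y).1) x + pd2 (fun y => (ξ y).2) x = 0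

/-- Euclidean norm of a vector in `ℝ²`. -/
noncomputable def enorm2 (v : ℝ × ℝ) : ℝ := Real.sqrt (v.1 ^ 2 + v.2 ^ 2)

/-- Squared `L²` norm over the fundamental domain. -/
noncomputable def L2sq (f : ℝ × ℝ → ℝ) : ℝ := ∫ x in Dom, (f x) ^ 2

/-- Squared `L²` norm of a vector field (Euclidean pointwise norm). -/
noncomputable def L2sqV (v : ℝ × ℝ → ℝ × ℝ) : ℝ := ∫ x in Dom, ((v x).1 ^ 2 + (v x).2 ^ 2)

/-- Supremum norm of a scalar function. -/
noncomputable def supAbs (f : ℝ × ℝ → ℝ) : ℝ := ⨆ x : ℝ × ℝ, |f x|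

/-- Supremum norm of a vector field (Euclidean pointwise norm). -/
noncomputable def supV (v : ℝ × ℝ → ℝ × ℝ) : ℝ := ⨆ x : ℝ × ℝ, enorm2 (v x)


lemma cont_pd1 {f : ℝ × ℝ → ℝ} (hf : ContDiff ℝ (⊤ : ℕ∞) f) : Continuous (pd1 f) :=
  (hf.continuous_fderiv (by simp)).clm_apply continuous_const

lemma cont_pd2 {f : ℝ × ℝ → ℝ} (hf : ContDiff ℝ (⊤ : ℕ∞) f) : Continuous (pd2 f) :=
  (hf.continuous_fderiv (by simp)).clm_apply continuous_const

lemma dom_subset : Dom ⊆ Set.Icc ((0:ℝ),(0:ℝ)) ((1:ℝ),(1:ℝ)) := by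
  rintro ⟨x, y⟩ ⟨hx, hy⟩
  exact ⟨⟨hx.1, hy.1⟩, ⟨hx.2.le, hy.2.le⟩⟩

lemma integrableOn_dom {f : ℝ × ℝ → ℝ} (hf : Continuous f) : IntegrableOn f Dom :=
  (hf.continuousOn.integrableOn_compact isCompact_Icc).mono_set dom_subset

lemma per_fderiv {f : ℝ × ℝ → ℝ} (hf : ContDiff ℝ (⊤ : ℕ∞) f) (hfp : Per f) :
    Per (fun x => fderiv ℝ f x) := by
  intro x m
  set c : ℝ × ℝ := ((m.1 : ℝ), (m.2 : ℝ)) with hc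
  have hxc : (x.1 + (m.1 : ℝ), x.2 + (m.2 : ℝ)) = x + c := by
    simp [hc, Prod.ext_iff]
  have hfun : (fun y : ℝ × ℝ => f (y + c)) = f := by
    funext y
    have := hfp y m
    rw [← this]
    rfl
  have h1 : HasFDerivAt (fun y : ℝ × ℝ => y + c) (ContinuousLinearMap.id ℝ (ℝ × ℝ)) x := by
    simpa using (hasFDerivAt_id x).add_const c
  have h2 : HasFDerivAt (fun y : ℝ × ℝ => f (y + c)) (fderiv ℝ f (x + c)) x := by
    exact ((hf.differentiable (by simp) (x + c)).hasFDerivAt.comp x h1)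
  rw [hfun] at h2
  show fderiv ℝ f _ = fderiv ℝ f x
  rw [hxc]
  exact h2.fderiv.symm

lemma per_pd1 {f : ℝ × ℝ → ℝ} (hf : ContDiff ℝ (⊤ : ℕ∞) f) (hfp : Per f) : Per (pd1 f) := by
  intro x m; unfold pd1; congr 1; exact per_fderiv hf hfp x m

lemma per_pd2 {f : ℝ × ℝ → ℝ} (hf : ContDiff ℝ (⊤ : ℕ∞) f) (hfp : Per f) : Per (pd2 f) := by
  intro x m; unfold pd2; congr 1; exact per_fderiv hf hfp x m

lemma per_bddAbove {f : ℝ × ℝ → ℝ} (hf : Continuous f) (hfp : Per f) :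
    BddAbove (Set.range f) := by
  obtain ⟨C, hC⟩ : ∃ C, ∀ y ∈ f '' (Set.Icc ((0:ℝ),(0:ℝ)) ((1:ℝ),(1:ℝ))), y ≤ C := by
    have := (isCompact_Icc (a := ((0:ℝ),(0:ℝ))) (b := ((1:ℝ),(1:ℝ)))).bddAbove_image
      hf.continuousOn
    obtain ⟨C, hC⟩ := this
    exact ⟨C, fun y hy => hC hy⟩
  refine ⟨C, ?_⟩
  rintro y ⟨x, rfl⟩
  have hx : f x = f (Int.fract x.1, Int.fract x.2) := by
    have := hfp (Int.fract x.1, Int.fract x.2) (⌊x.1⌋, ⌊x.2⌋)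
    simp only [Int.fract_add_floor] at this
    rw [← this]
  rw [hx]
  exact hC _ ⟨(Int.fract x.1, Int.fract x.2),
    ⟨⟨Int.fract_nonneg _, Int.fract_nonneg _⟩,
      ⟨(Int.fract_lt_one _).le, (Int.fract_lt_one _).le⟩⟩, rfl⟩

lemma integral_pd1_zero {f : ℝ × ℝ → ℝ} (hf : ContDiff ℝ (⊤ : ℕ∞) f) (hfp : Per f) :
    ∫ x in Dom, pd1 f x = 0 := by
  have hdiff := hf.differentiable (by simp)
  have hcont : Continuous (pd1 f) := cont_pd1 hf
  have hint : Integrable (pd1 f)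
      ((volume.restrict (Ico (0:ℝ) 1)).prod (volume.restrict (Ico (0:ℝ) 1))) := by
    rw [Measure.prod_restrict]
    have := integrableOn_dom hcont
    rwa [IntegrableOn, Dom, Measure.volume_eq_prod] at this
  have key : ∀ y : ℝ, ∫ x in Ico (0:ℝ) 1, pd1 f (x, y) = 0 := by
    intro y
    have hderiv : ∀ t ∈ uIcc (0:ℝ) 1, HasDerivAt (fun s => f (s, y)) (pd1 f (t, y)) t := by
      intro t _
      have h1 : HasDerivAt (fun s : ℝ => (s, y)) ((1:ℝ), (0:ℝ)) t :=
        (hasDerivAt_id t).prodMk (hasDerivAt_const t y)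
      exact (hdiff (t, y)).hasFDerivAt.comp_hasDerivAt t h1
    have hcont' : Continuous fun t : ℝ => pd1 f (t, y) :=
      hcont.comp (continuous_id.prodMk continuous_const)
    have hftc := intervalIntegral.integral_eq_sub_of_hasDerivAt hderiv
      (hcont'.intervalIntegrable 0 1)
    have h0 : f (1, y) = f (0, y) := by simpa using hfp (0, y) (1, 0)
    rw [setIntegral_congr_set Ico_ae_eq_Ioc, ← intervalIntegral.integral_of_le zero_le_one,
      hftc]
    simp [h0]
  rw [Dom, Measure.volume_eq_prod, ← Measure.prod_restrict,
    MeasureTheory.integral_prod_symm _ hint]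
  simp [key]

lemma integral_pd2_zero {f : ℝ × ℝ → ℝ} (hf : ContDiff ℝ (⊤ : ℕ∞) f) (hfp : Per f) :
    ∫ x in Dom, pd2 f x = 0 := by
  have hdiff := hf.differentiable (by simp)
  have hcont : Continuous (pd2 f) := cont_pd2 hf
  have hint : Integrable (pd2 f)
      ((volume.restrict (Ico (0:ℝ) 1)).prod (volume.restrict (Ico (0:ℝ) 1))) := by
    rw [Measure.prod_restrict]
    have := integrableOn_dom hcont
    rwa [IntegrableOn, Dom, Measure.volume_eq_prod] at this
  have key : ∀ x : ℝ, ∫ y in Ico (0:ℝ) 1, pd2 f (x, y) = 0 := by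
    intro x
    have hderiv : ∀ t ∈ uIcc (0:ℝ) 1, HasDerivAt (fun s => f (x, s)) (pd2 f (x, t)) t := by
      intro t _
      have h1 : HasDerivAt (fun s : ℝ => (x, s)) ((0:ℝ), (1:ℝ)) t :=
        (hasDerivAt_const t x).prodMk (hasDerivAt_id t)
      exact (hdiff (x, t)).hasFDerivAt.comp_hasDerivAt t h1
    have hcont' : Continuous fun t : ℝ => pd2 f (x, t) :=
      hcont.comp (continuous_const.prodMk continuous_id)
    have hftc := intervalIntegral.integral_eq_sub_of_hasDerivAt hderiv
      (hcont'.intervalIntegrable 0 1)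
    have h0 : f (x, 1) = f (x, 0) := by simpa using hfp (x, 0) (0, 1)
    rw [setIntegral_congr_set Ico_ae_eq_Ioc, ← intervalIntegral.integral_of_le zero_le_one,
      hftc]
    simp [h0]
  rw [Dom, Measure.volume_eq_prod, ← Measure.prod_restrict,
    MeasureTheory.integral_prod _ hint]
  simp [key]


lemma fderiv_apply_mul {a b : ℝ × ℝ → ℝ} (ha : ContDiff ℝ (⊤ : ℕ∞) a) (hb : ContDiff ℝ (⊤ : ℕ∞) b)
    (x v : ℝ × ℝ) :
    fderiv ℝ (fun y => a y * b y) x v = fderiv ℝ a x v * b x + a x * fderiv ℝ b x v := by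
  rw [fderiv_fun_mul (ha.differentiable (by simp) x) (hb.differentiable (by simp) x)]
  simp only [ContinuousLinearMap.add_apply, ContinuousLinearMap.smul_apply, smul_eq_mul]
  ring

lemma cont_transport {ξ : ℝ × ℝ → ℝ × ℝ} {f : ℝ × ℝ → ℝ} (hξ : Continuous ξ)
    (hf : ContDiff ℝ (⊤ : ℕ∞) f) : Continuous (transport ξ f) := by
  unfold transport
  exact ((continuous_fst.comp hξ).mul (cont_pd1 hf)).add
    ((continuous_snd.comp hξ).mul (cont_pd2 hf))

lemma key_zero {ω : ℝ × ℝ → ℝ} {ξ : ℝ × ℝ → ℝ × ℝ} (hω : ContDiff ℝ (⊤ : ℕ∞) ω) (hωp : Per ω)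
    (hξ : ContDiff ℝ (⊤ : ℕ∞) ξ) (hξp : Per ξ) (hdiv : DivFree ξ) :
    ∫ x in Dom, ω x * transport ξ ω x = 0 := by
  have hξ1 : ContDiff ℝ (⊤ : ℕ∞) (fun y => (ξ y).1) := contDiff_fst.comp hξ
  have hξ2 : ContDiff ℝ (⊤ : ℕ∞) (fun y => (ξ y).2) := contDiff_snd.comp hξ
  have hg1s : ContDiff ℝ (⊤ : ℕ∞) (fun x => (ξ x).1 * (ω x * ω x)) := hξ1.mul (hω.mul hω)
  have hg2s : ContDiff ℝ (⊤ : ℕ∞) (fun x => (ξ x).2 * (ω x * ω x)) := hξ2.mul (hω.mul hω)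
  have hg1p : Per (fun x => (ξ x).1 * (ω x * ω x)) := by
    intro x m; simp only [hξp x m, hωp x m]
  have hg2p : Per (fun x => (ξ x).2 * (ω x * ω x)) := by
    intro x m; simp only [hξp x m, hωp x m]
  have hident : ∀ x, pd1 (fun x => (ξ x).1 * (ω x * ω x)) x
      + pd2 (fun x => (ξ x).2 * (ω x * ω x)) x = 2 * (ω x * transport ξ ω x) := by
    intro x
    have e1 : pd1 (fun x => (ξ x).1 * (ω x * ω x)) x
        = pd1 (fun y => (ξ y).1) x * (ω x * ω x)
          + (ξ x).1 * (pd1 ω x * ω x + ω x * pd1 ω x) := by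
      show fderiv ℝ (fun y => (fun y => (ξ y).1) y * (fun y => ω y * ω y) y) x (1, 0) = _
      rw [fderiv_apply_mul hξ1 (hω.mul hω) x (1, 0),
        fderiv_apply_mul hω hω x (1, 0)]
      rfl
    have e2 : pd2 (fun x => (ξ x).2 * (ω x * ω x)) x
        = pd2 (fun y => (ξ y).2) x * (ω x * ω x)
          + (ξ x).2 * (pd2 ω x * ω x + ω x * pd2 ω x) := by
      show fderiv ℝ (fun y => (fun y => (ξ y).2) y * (fun y => ω y * ω y) y) x (0, 1) = _
      rw [fderiv_apply_mul hξ2 (hω.mul hω) x (0, 1),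
        fderiv_apply_mul hω hω x (0, 1)]
      rfl
    rw [e1, e2]
    have hd := hdiv x
    unfold transport
    linear_combination (ω x * ω x) * hd
  have hzero : ∫ x in Dom, (pd1 (fun x => (ξ x).1 * (ω x * ω x)) x
      + pd2 (fun x => (ξ x).2 * (ω x * ω x)) x) = 0 := by
    rw [integral_add (integrableOn_dom (cont_pd1 hg1s)) (integrableOn_dom (cont_pd2 hg2s)),
      integral_pd1_zero hg1s hg1p, integral_pd2_zero hg2s hg2p, add_zero]
  rw [funext hident] at hzero
  rw [integral_const_mul] at hzero
  linarith

lemma cauchy2 (p q r s : ℝ) : |p * q + r * s| ≤ Real.sqrt (p ^ 2 + r ^ 2) * Real.sqrt (q ^ 2 + s ^ 2) := by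
  have h1 : (p * q + r * s) ^ 2 ≤ (p ^ 2 + r ^ 2) * (q ^ 2 + s ^ 2) := by
    nlinarith [sq_nonneg (p * s - r * q)]
  calc |p * q + r * s| = Real.sqrt ((p * q + r * s) ^ 2) := (Real.sqrt_sq_eq_abs _).symm
    _ ≤ Real.sqrt ((p ^ 2 + r ^ 2) * (q ^ 2 + s ^ 2)) := Real.sqrt_le_sqrt h1
    _ = _ := Real.sqrt_mul (by positivity) _



/-- Estimate of the term `Q` in Lemma `estimates` of the paper. -/
theorem estimate_Q (ω1 ω2 : ℝ × ℝ → ℝ) (ξ1 ξ2 : ℝ × ℝ → ℝ × ℝ)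
    (hω1 : ContDiff ℝ (⊤ : ℕ∞) ω1) (hω1p : Per ω1) (hω2 : ContDiff ℝ (⊤ : ℕ∞) ω2) (hω2p : Per ω2)
    (hξ1 : ContDiff ℝ (⊤ : ℕ∞) ξ1) (hξ1p : Per ξ1) (hξ2 : ContDiff ℝ (⊤ : ℕ∞) ξ2) (hξ2p : Per ξ2)
    (hdiv : DivFree ξ2) :
    |∫ x in Dom, (ω1 x - ω2 x) * (transport ξ1 ω1 x - transport ξ2 ω2 x)| ≤
      (1/2) * L2sq (fun x => ω1 x - ω2 x) +
        (1/2) * (supV (grad ω1)) ^ 2 * L2sqV (fun x => ξ1 x - ξ2 x) := by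
  have hωb : ContDiff ℝ (⊤ : ℕ∞) (fun x => ω1 x - ω2 x) := hω1.sub hω2
  have hωbp : Per (fun x => ω1 x - ω2 x) := by
    intro x m; simp only [hω1p x m, hω2p x m]
  have hξb : ContDiff ℝ (⊤ : ℕ∞) (fun x => ξ1 x - ξ2 x) := hξ1.sub hξ2
  set M := supV (grad ω1) with hM
  -- sup is a bound
  have hgradcont : Continuous fun x => enorm2 (grad ω1 x) := by
    unfold enorm2 grad
    exact Real.continuous_sqrt.comp (((cont_pd1 hω1).pow 2).add ((cont_pd2 hω1).pow 2))
  have hgradper : Per fun x => enorm2 (grad ω1 x) := by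
    intro x m
    unfold enorm2 grad
    simp only [per_pd1 hω1 hω1p x m, per_pd2 hω1 hω1p x m]
  have hbdd := per_bddAbove hgradcont hgradper
  have hMle : ∀ x, enorm2 (grad ω1 x) ≤ M := fun x => le_ciSup hbdd x
  have hM0 : (0:ℝ) ≤ M := le_trans (Real.sqrt_nonneg _) (hMle 0)
  -- pointwise decomposition
  have hdecomp : ∀ x, (ω1 x - ω2 x) * (transport ξ1 ω1 x - transport ξ2 ω2 x)
      = (ω1 x - ω2 x) * transport (fun y => ξ1 y - ξ2 y) ω1 x
        + (ω1 x - ω2 x) * transport ξ2 (fun y => ω1 y - ω2 y) x := by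
    intro x
    have hp1 : pd1 (fun y => ω1 y - ω2 y) x = pd1 ω1 x - pd1 ω2 x := by
      show fderiv ℝ (fun y => ω1 y - ω2 y) x (1, 0) = _
      rw [fderiv_fun_sub (hω1.differentiable (by simp) x) (hω2.differentiable (by simp) x)]
      rfl
    have hp2 : pd2 (fun y => ω1 y - ω2 y) x = pd2 ω1 x - pd2 ω2 x := by
      show fderiv ℝ (fun y => ω1 y - ω2 y) x (0, 1) = _
      rw [fderiv_fun_sub (hω1.differentiable (by simp) x) (hω2.differentiable (by simp) x)]
      rfl
    unfold transport
    rw [hp1, hp2]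
    simp only [Prod.fst_sub, Prod.snd_sub]
    ring
  -- split the integral
  have hint1 : IntegrableOn
      (fun x => (ω1 x - ω2 x) * transport (fun y => ξ1 y - ξ2 y) ω1 x) Dom :=
    integrableOn_dom ((hω1.continuous.sub hω2.continuous).mul
      (cont_transport (hξ1.continuous.sub hξ2.continuous) hω1))
  have hint2 : IntegrableOn
      (fun x => (ω1 x - ω2 x) * transport ξ2 (fun y => ω1 y - ω2 y) x) Dom :=
    integrableOn_dom ((hω1.continuous.sub hω2.continuous).mul
      (cont_transport hξ2.continuous hωb))
  have hsplit : ∫ x in Dom, (ω1 x - ω2 x) * (transport ξ1 ω1 x - transport ξ2 ω2 x)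
      = ∫ x in Dom, (ω1 x - ω2 x) * transport (fun y => ξ1 y - ξ2 y) ω1 x := by
    rw [funext hdecomp, integral_add hint1 hint2,
      key_zero hωb hωbp hξ2 hξ2p hdiv, add_zero]
  rw [hsplit]
  -- pointwise bound
  have hpt : ∀ x, |(ω1 x - ω2 x) * transport (fun y => ξ1 y - ξ2 y) ω1 x|
      ≤ (1/2) * (ω1 x - ω2 x) ^ 2
        + (1/2) * M ^ 2 * (((ξ1 x - ξ2 x).1) ^ 2 + ((ξ1 x - ξ2 x).2) ^ 2) := by
    intro x
    have hT : |transport (fun y => ξ1 y - ξ2 y) ω1 x|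
        ≤ enorm2 (ξ1 x - ξ2 x) * enorm2 (grad ω1 x) := by
      unfold transport enorm2 grad
      simpa using cauchy2 ((ξ1 x - ξ2 x).1) (pd1 ω1 x) ((ξ1 x - ξ2 x).2) (pd2 ω1 x)
    have he0 : (0:ℝ) ≤ enorm2 (ξ1 x - ξ2 x) := Real.sqrt_nonneg _
    have hT2 : |transport (fun y => ξ1 y - ξ2 y) ω1 x| ≤ enorm2 (ξ1 x - ξ2 x) * M :=
      hT.trans (by gcongr; exact hMle x)
    have he : (enorm2 (ξ1 x - ξ2 x)) ^ 2 = ((ξ1 x - ξ2 x).1) ^ 2 + ((ξ1 x - ξ2 x).2) ^ 2 :=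
      Real.sq_sqrt (by positivity)
    have habs : |(ω1 x - ω2 x) * transport (fun y => ξ1 y - ξ2 y) ω1 x|
        ≤ |ω1 x - ω2 x| * (enorm2 (ξ1 x - ξ2 x) * M) := by
      rw [abs_mul]
      exact mul_le_mul_of_nonneg_left hT2 (abs_nonneg _)
    nlinarith [sq_nonneg (|ω1 x - ω2 x| - enorm2 (ξ1 x - ξ2 x) * M), sq_abs (ω1 x - ω2 x),
      abs_nonneg ((ω1 x - ω2 x) * transport (fun y => ξ1 y - ξ2 y) ω1 x)]
  -- integrate the bound
  have hintA : IntegrableOn (fun x => (1/2 : ℝ) * (ω1 x - ω2 x) ^ 2) Dom :=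
    integrableOn_dom (continuous_const.mul ((hω1.continuous.sub hω2.continuous).pow 2))
  have hintB : IntegrableOn (fun x => (1/2 : ℝ) * M ^ 2
      * (((ξ1 x - ξ2 x).1) ^ 2 + ((ξ1 x - ξ2 x).2) ^ 2)) Dom :=
    integrableOn_dom (continuous_const.mul
      ((((hξ1.continuous.sub hξ2.continuous).fst.pow 2)).add
        ((hξ1.continuous.sub hξ2.continuous).snd.pow 2)))
  have hintRHS : IntegrableOn (fun x => (1/2) * (ω1 x - ω2 x) ^ 2
      + (1/2) * M ^ 2 * (((ξ1 x - ξ2 x).1) ^ 2 + ((ξ1 x - ξ2 x).2) ^ 2)) Dom :=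
    hintA.add hintB
  calc |∫ x in Dom, (ω1 x - ω2 x) * transport (fun y => ξ1 y - ξ2 y) ω1 x|
      ≤ ∫ x in Dom, |(ω1 x - ω2 x) * transport (fun y => ξ1 y - ξ2 y) ω1 x| := by
        simpa only [Real.norm_eq_abs] using
          norm_integral_le_integral_norm
            (fun x => (ω1 x - ω2 x) * transport (fun y => ξ1 y - ξ2 y) ω1 x)
            (μ := volume.restrict Dom)
    _ ≤ ∫ x in Dom, ((1/2) * (ω1 x - ω2 x) ^ 2
        + (1/2) * M ^ 2 * (((ξ1 x - ξ2 x).1) ^ 2 + ((ξ1 x - ξ2 x).2) ^ 2)) :=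
        integral_mono hint1.abs hintRHS hpt
    _ = (1/2) * L2sq (fun x => ω1 x - ω2 x) + (1/2) * M ^ 2 * L2sqV (fun x => ξ1 x - ξ2 x) := by
        rw [integral_add hintA hintB, integral_const_mul, integral_const_mul]
        rfl

end
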